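/- If (T*,λ*) is a least-resolved tree for a tree-like map ε, then (T*,λ*) contains no inner edge with label ⊗. -/

import Mathlib

namespace GenFitch

/-- A rooted tree with leaf set `X`: a finite tree (acyclic connected simple
graph) with a distinguished root and an injective embedding of `X` onto the
set of vertices of degree at most one (the leaves). -/
structure RootedTree (X : Type) where
  V : Type
  fintypeV : Fintype V
  G : SimpleGraph V
  isTree : G.IsTree
  root : V
  leaf : X → V
  leaf_inj : Function.Injective leaf
  leaf_iff : ∀ v : V, (∃ x : X, leaf x = v) ↔ (G.neighborSet v).ncard ≤ 1

namespace RootedTree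

variable {X : Type}

/-- Degree of a vertex. -/
noncomputable def deg (T : RootedTree X) (v : T.V) : ℕ := (T.G.neighborSet v).ncard

/-- `v` is a leaf. -/
def IsLeaf (T : RootedTree X) (v : T.V) : Prop := ∃ x : X, T.leaf x = v

/-- `T` is phylogenetic: the root is an inner vertex of degree at least 2 and
every other inner vertex has degree at least 3. -/
def Phylo (T : RootedTree X) : Prop :=
  ¬ T.IsLeaf T.root ∧ 2 ≤ T.deg T.root ∧
    ∀ v : T.V, ¬ T.IsLeaf v → v ≠ T.root → 3 ≤ T.deg v

/-- `T` is binary: the root has degree exactly 2 and every other inner vertex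
has degree exactly 3. -/
def Binary (T : RootedTree X) : Prop :=
  T.deg T.root = 2 ∧ ∀ v : T.V, ¬ T.IsLeaf v → v ≠ T.root → T.deg v = 3

/-- `u` is an ancestor of `v` (written `u ⪰_T v`): `u` lies on the (unique)
path from the root to `v`. -/
def Anc (T : RootedTree X) (u v : T.V) : Prop :=
  ∀ p : T.G.Walk T.root v, p.IsPath → u ∈ p.support

/-- `l` is the least common ancestor of the set of vertices `S`. -/
def IsLcaSet (T : RootedTree X) (l : T.V) (S : Set T.V) : Prop :=
  (∀ v ∈ S, T.Anc l v) ∧ ∀ u : T.V, (∀ v ∈ S, T.Anc u v) → T.Anc u l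

/-- `T` displays the rooted triple `xy|z`, i.e. `lca(x,y) ≺ lca(x,y,z)`. -/
def Displays (T : RootedTree X) (x y z : X) : Prop :=
  ∃ l₂ l₃ : T.V, T.IsLcaSet l₂ {T.leaf x, T.leaf y} ∧
    T.IsLcaSet l₃ {T.leaf x, T.leaf y, T.leaf z} ∧ T.Anc l₃ l₂ ∧ l₂ ≠ l₃

end RootedTree

/-- Some edge on the (unique) path from `lca(x,y)` to `y` carries the label
`m`.  Labels are drawn from `Option L`, with `none` playing the role of `⊗`. -/
def PathHasLabel {X L : Type} (T : RootedTree X) (lam : Sym2 T.V → Option L)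
    (x y : X) (m : L) : Prop :=
  ∃ l : T.V, T.IsLcaSet l {T.leaf x, T.leaf y} ∧
    ∃ p : T.G.Walk l (T.leaf y), p.IsPath ∧ ∃ e ∈ p.edges, lam e = some m

/-- The edge-labeled tree `(T,lam)` explains the map `eps`:
for all distinct `x y`, `eps x y = some m` iff some edge on the path from
`lca(x,y)` to `y` has label `m`, and `eps x y = none` (i.e. `⊗`) iff no edge
on that path carries a label in `L`. -/
def Explains {X L : Type} (T : RootedTree X) (lam : Sym2 T.V → Option L)
    (eps : X → X → Option L) : Prop :=
  ∀ x y : X, x ≠ y →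
    ((∀ m : L, eps x y = some m ↔ PathHasLabel T lam x y m) ∧
     (eps x y = none ↔ ∀ m : L, ¬ PathHasLabel T lam x y m))

/-- `eps` is tree-like: some edge-labeled phylogenetic tree explains it. -/
def TreeLike {X L : Type} (eps : X → X → Option L) : Prop :=
  ∃ (T : RootedTree X) (lam : Sym2 T.V → Option L), T.Phylo ∧ Explains T lam eps

/-- The set `X_s` for a symbol `s ∈ M ∪ {⊗}` (encoded as `s : Option M`):
those `x` having an in-arc labeled `s` and all other in-arcs labeled `⊗` or `s`. -/
def Xset {X M : Type} (eps : X → X → Option M) (s : Option M) : Set X :=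
  {x : X | ∃ z : X, z ≠ x ∧ eps z x = s ∧
    ∀ z' : X, z' ≠ z → z' ≠ x → (eps z' x = none ∨ eps z' x = s)}

/-- The sets `X_s`, `s ∈ M ∪ {⊗}`, form a quasi-partition of `X`: pairwise
disjoint, union `X`, and at most one of them empty. -/
def QuasiPartition {X M : Type} (eps : X → X → Option M) : Prop :=
  (∀ s t : Option M, s ≠ t → Disjoint (Xset eps s) (Xset eps t)) ∧
  (⋃ s : Option M, Xset eps s) = Set.univ ∧
  {s : Option M | Xset eps s = ∅}.Subsingleton

/-- A digraph `(Y, A)` is a simple Fitch graph: it is explained by a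
`{1,⊗}`-edge-labeled phylogenetic tree on `Y` (a digraph on at most one
vertex is trivially explained by the trivial tree). -/
def IsFitchGraph (Y : Type) (A : Y → Y → Prop) : Prop :=
  Subsingleton Y ∨
  ∃ (T : RootedTree Y) (lam : Sym2 T.V → Option Unit), T.Phylo ∧
    ∀ x y : Y, x ≠ y → (A x y ↔ PathHasLabel T lam x y Unit.unit)

/-- `T'` is obtained from `T` by contracting (the fibers of) `φ`; equivalently,
`T` refines `T'`. -/
structure IsContractionMap {X : Type} (T T' : RootedTree X) (φ : T.V → T'.V) :
    Prop where
  surj : Function.Surjective φ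
  root_map : φ T.root = T'.root
  leaf_map : ∀ x : X, φ (T.leaf x) = T'.leaf x
  adj_map : ∀ a b : T.V, T.G.Adj a b → φ a = φ b ∨ T'.G.Adj (φ a) (φ b)
  adj_lift : ∀ u v : T'.V, T'.G.Adj u v →
    ∃ a b : T.V, T.G.Adj a b ∧ φ a = u ∧ φ b = v
  fiber_conn : ∀ u : T'.V, (T.G.induce {a : T.V | φ a = u}).Connected

/-- `(T,lam)` is a least-resolved tree explaining `eps`: it explains `eps` and
no tree obtained from `T` by contracting one or more edges admits an
edge-labeling explaining `eps`. -/
def LeastResolved {X M : Type} (eps : X → X → Option M) (T : RootedTree X)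
    (lam : Sym2 T.V → Option M) : Prop :=
  T.Phylo ∧ Explains T lam eps ∧
    ∀ (T' : RootedTree X) (φ : T.V → T'.V) (lam' : Sym2 T'.V → Option M),
      IsContractionMap T T' φ → ¬ Function.Injective φ → T'.Phylo →
        ¬ Explains T' lam' eps

/-- The rooted triple `xy|z` is informative for `eps`. -/
def Informative {X M : Type} (eps : X → X → Option M) (x y z : X) : Prop :=
  x ≠ y ∧ x ≠ z ∧ y ≠ z ∧
  ∃ m : M, eps z x = some m ∧ eps z y = some m ∧ eps x z = eps y z ∧
    (eps x y = none ∨ eps x y = some m) ∧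
    (eps y x = none ∨ eps y x = some m) ∧
    (eps x y = none ∨ eps y x = none)

/-- `T'` (a rooted tree on `Y`, with `incl : Y → X` and vertex embedding `ι`)
is the restriction `T|Y` of `T` to the leaf set `Y`: leaves map to leaves,
the ancestor relation is preserved and reflected, the vertices of `T'`
correspond exactly to the least common ancestors of pairs of `Y`-leaves in
`T`, and the root of `T'` corresponds to the least common ancestor of all
`Y`-leaves. -/
structure IsRestriction {X Y : Type} (T : RootedTree X) (incl : Y → X)
    (T' : RootedTree Y) (ι : T'.V → T.V) : Prop where
  inj : Function.Injective ι
  leaf_map : ∀ y : Y, ι (T'.leaf y) = T.leaf (incl y)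
  anc_iff : ∀ a b : T'.V, T'.Anc a b ↔ T.Anc (ι a) (ι b)
  image : ∀ v : T.V, (∃ a : T'.V, ι a = v) ↔
      ∃ y z : Y, T.IsLcaSet v {T.leaf (incl y), T.leaf (incl z)}
  root_map : T.IsLcaSet (ι T'.root) {v : T.V | ∃ y : Y, v = T.leaf (incl y)}

/-!
If an inner edge `ab` of a least-resolved tree were labelled `⊗`, contract it by identifying `b`
with `a`. The result is again a tree (connected, with one vertex and one edge fewer), and it is
phylogenetic: the merged vertex has degree `deg a + deg b - 2 ≥ 3`, all other degrees are
unchanged. Contraction preserves ancestors and least common ancestors; a vertex with the two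
preimages `a` and `b` is handled by the upper of the two. The path from `lca(x, y)` to `y` maps
onto the corresponding path of the contracted tree and loses at most the edge `ab`, whose label is
`⊗`, so the contracted tree with the inherited labels still explains `ε`: a contradiction.
-/

end GenFitch

namespace SimpleGraph

section Acyclic

variable {V : Type*} {G : SimpleGraph V}

lemma IsAcyclic.walk_eq_of_isPath (hG : G.IsAcyclic) {u v : V} {p q : G.Walk u v}
    (hp : p.IsPath) (hq : q.IsPath) : p = q :=
  Subtype.mk.inj ((hG.subsingleton_path u v).elim ⟨p, hp⟩ ⟨q, hq⟩)

lemma IsAcyclic.not_adj_of_adj_of_adj (hG : G.IsAcyclic) {a b c : V}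
    (hab : G.Adj a b) (hac : G.Adj a c) : ¬ G.Adj b c := by
  intro hbc
  have hp : (Walk.cons hab (Walk.cons hbc Walk.nil)).IsPath := by
    simp [hab.ne, hac.ne, hbc.ne]
  exact hbc.ne (hG.eq_snd_of_adj_start hp hac (by simp)).symm

end Acyclic

section EdgeContraction

variable {V : Type*} {G : SimpleGraph V} {a b : V} (hab : G.Adj a b)

open Classical in
/-- Contracting the edge `ab` identifies `b` with `a`; the merged vertex is represented by `a`. -/
noncomputable def contractMap (v : V) : {v : V // v ≠ b} :=
  if h : v = b then ⟨a, hab.ne⟩ else ⟨v, h⟩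

lemma contractMap_of_ne {v : V} (h : v ≠ b) : contractMap hab v = ⟨v, h⟩ := dif_neg h

lemma contractMap_left : contractMap hab a = ⟨a, hab.ne⟩ := contractMap_of_ne hab hab.ne

lemma contractMap_right : contractMap hab b = ⟨a, hab.ne⟩ := dif_pos rfl

lemma contractMap_val (u : {v : V // v ≠ b}) : contractMap hab u = u := contractMap_of_ne hab u.2

lemma contractMap_eq_iff {x y : V} :
    contractMap hab x = contractMap hab y ↔ x = y ∨ s(x, y) = s(a, b) := by
  have := hab.ne
  unfold contractMap
  split_ifs <;> simp [Subtype.ext_iff] <;> grind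

lemma contractMap_injOn : Set.InjOn (contractMap hab) {v | v ≠ b} := fun x hx y hy h => by
  rwa [contractMap_of_ne hab hx, contractMap_of_ne hab hy, Subtype.mk.injEq] at h

lemma contractMap_injOn_neighborSet (hG : G.IsAcyclic) (v : V) :
    Set.InjOn (contractMap hab) (G.neighborSet v) := by
  intro x hx y hy h
  rcases (contractMap_eq_iff hab).1 h with h | h
  · exact h
  rcases Sym2.eq_iff.1 h with ⟨rfl, rfl⟩ | ⟨rfl, rfl⟩
  · exact (hG.not_adj_of_adj_of_adj hx hy hab).elim
  · exact (hG.not_adj_of_adj_of_adj hy hx hab).elim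

lemma connected_induce_contractMap_fiber (u : {v : V // v ≠ b}) :
    (G.induce {x | contractMap hab x = u}).Connected := by
  refine (connected_iff _).2 ⟨fun z w => ?_, ⟨⟨u.1, contractMap_val hab u⟩⟩⟩
  rcases (contractMap_eq_iff hab).1 (z.2.trans w.2.symm) with h | h
  · rw [Subtype.ext h]
  · exact Adj.reachable (show G.Adj z.1 w.1 by rw [← SimpleGraph.mem_edgeSet, h]; exact hab)


def contractGraph : SimpleGraph {v : V // v ≠ b} where
  Adj u v := u ≠ v ∧ ∃ x y, G.Adj x y ∧ contractMap hab x = u ∧ contractMap hab y = v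
  symm := ⟨fun _ _ ⟨h, x, y, hxy, hx, hy⟩ => ⟨h.symm, y, x, hxy.symm, hy, hx⟩⟩
  loopless := ⟨fun _ h => h.1 rfl⟩

lemma contractGraph_adj {u v : {v : V // v ≠ b}} : (contractGraph hab).Adj u v ↔
    u ≠ v ∧ ∃ x y, G.Adj x y ∧ contractMap hab x = u ∧ contractMap hab y = v :=
  Iff.rfl

lemma contractMap_eq_iff_of_adj {x y : V} (h : G.Adj x y) :
    contractMap hab x = contractMap hab y ↔ s(x, y) = s(a, b) := by
  rw [contractMap_eq_iff, or_iff_right h.ne]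

lemma edgeSet_contractGraph :
    (contractGraph hab).edgeSet = Sym2.map (contractMap hab) '' (G.edgeSet \ {s(a, b)}) := by
  ext e'
  induction e' using Sym2.ind with | _ u v =>
  simp only [mem_edgeSet, contractGraph_adj, Set.mem_image, Set.mem_sdiff, Set.mem_singleton_iff]
  constructor
  · rintro ⟨huv, x, y, hxy, rfl, rfl⟩
    exact ⟨s(x, y), ⟨hxy, fun h => huv ((contractMap_eq_iff_of_adj hab hxy).2 h)⟩, rfl⟩
  · rintro ⟨e, ⟨he, hne⟩, hmap⟩
    induction e using Sym2.ind with | _ x y =>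
    rw [Sym2.map_mk] at hmap
    have hxy : contractMap hab x ≠ contractMap hab y := fun h =>
      hne ((contractMap_eq_iff_of_adj hab he).1 h)
    rcases Sym2.eq_iff.1 hmap with ⟨rfl, rfl⟩ | ⟨rfl, rfl⟩
    · exact ⟨hxy, x, y, he, rfl, rfl⟩
    · exact ⟨hxy.symm, y, x, he.symm, rfl, rfl⟩

lemma injOn_map_contractMap_edgeSet (hG : G.IsAcyclic) :
    Set.InjOn (Sym2.map (contractMap hab)) (G.edgeSet \ {s(a, b)}) := by
  rintro ⟨x₁, y₁⟩ ⟨h₁, hne₁⟩ ⟨x₂, y₂⟩ ⟨h₂, -⟩ h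
  rw [mem_edgeSet] at h₁ h₂
  have key : ∀ {x₁ y₁ x₂ y₂ : V}, G.Adj x₁ y₁ → G.Adj x₂ y₂ → s(x₁, y₁) ≠ s(a, b) →
      contractMap hab x₁ = contractMap hab x₂ → contractMap hab y₁ = contractMap hab y₂ →
      x₁ = x₂ ∧ y₁ = y₂ := by
    intro x₁ y₁ x₂ y₂ h₁ h₂ hne hx hy
    rcases (contractMap_eq_iff hab).1 hx with rfl | hx'
    · exact ⟨rfl, contractMap_injOn_neighborSet hab hG x₁ h₁ h₂ hy⟩
    rcases (contractMap_eq_iff hab).1 hy with rfl | hy'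
    · exact ⟨contractMap_injOn_neighborSet hab hG y₁ h₁.symm h₂.symm hx, rfl⟩
    exfalso
    rcases Sym2.eq_iff.1 hx' with ⟨rfl, rfl⟩ | ⟨rfl, rfl⟩ <;>
      rcases Sym2.eq_iff.1 hy' with ⟨rfl, rfl⟩ | ⟨rfl, rfl⟩
    all_goals first | exact h₁.ne rfl | exact h₂.ne rfl | exact hne rfl | exact hne Sym2.eq_swap
  rw [Set.mem_singleton_iff] at hne₁
  simp only [Sym2.map_mk, Sym2.eq_iff] at h ⊢
  rcases h with ⟨hx, hy⟩ | ⟨hx, hy⟩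
  · exact Or.inl (key h₁ h₂ hne₁ hx hy)
  · exact Or.inr (key h₁ h₂.symm hne₁ hx hy)

open Classical in
noncomputable def contractWalk : ∀ {u v : V}, G.Walk u v →
    (contractGraph hab).Walk (contractMap hab u) (contractMap hab v)
  | _, _, .nil => .nil
  | u, _, .cons (v := w) h q =>
    if heq : contractMap hab u = contractMap hab w then (contractWalk q).copy heq.symm rfl
    else .cons ((contractGraph_adj hab).2 ⟨heq, u, w, h, rfl, rfl⟩) (contractWalk q)

open Classical in
lemma contractWalk_cons {u w v : V} (h : G.Adj u w) (q : G.Walk w v) :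
    contractWalk hab (.cons h q) =
      if heq : contractMap hab u = contractMap hab w then (contractWalk hab q).copy heq.symm rfl
      else .cons ((contractGraph_adj hab).2 ⟨heq, u, w, h, rfl, rfl⟩) (contractWalk hab q) := by
  rw [contractWalk]

lemma mem_support_contractWalk {u v : V} (p : G.Walk u v) (z : {v : V // v ≠ b}) :
    z ∈ (contractWalk hab p).support ↔ ∃ y ∈ p.support, contractMap hab y = z := by
  induction p with
  | nil => simp [contractWalk, eq_comm]
  | @cons u w v h q ih =>
    rw [contractWalk_cons]
    split_ifs with heq
    · simp only [Walk.support_copy, ih, Walk.support_cons, List.mem_cons, exists_eq_or_imp, heq]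
      exact ⟨Or.inr, fun h' => h'.elim (fun h'' => ⟨w, q.start_mem_support, h''⟩) id⟩
    · simp only [Walk.support_cons, List.mem_cons, ih, or_and_right, exists_or, exists_eq_left]
      exact or_congr_left eq_comm

lemma mem_edges_contractWalk {u v : V} (p : G.Walk u v) (e' : Sym2 {v : V // v ≠ b}) :
    e' ∈ (contractWalk hab p).edges ↔
      ∃ e ∈ p.edges, e ≠ s(a, b) ∧ Sym2.map (contractMap hab) e = e' := by
  induction p with
  | nil => simp [contractWalk]
  | @cons u w v h q ih =>
    rw [contractWalk_cons]
    split_ifs with heq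
    · have hab' := (contractMap_eq_iff_of_adj hab h).1 heq
      simp only [Walk.edges_copy, ih, Walk.edges_cons, List.mem_cons, exists_eq_or_imp, hab',
        ne_eq, not_true_eq_false, false_and, false_or]
    · have hab' : s(u, w) ≠ s(a, b) := fun h' => heq ((contractMap_eq_iff_of_adj hab h).2 h')
      simp only [Walk.edges_cons, List.mem_cons, ih, exists_eq_or_imp, hab', Sym2.map_mk,
        ne_eq, not_false_eq_true, true_and, eq_comm]

lemma Walk.IsPath.contractWalk (hG : G.IsAcyclic) {u v : V} {p : G.Walk u v} (hp : p.IsPath) :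
    (contractWalk hab p).IsPath := by
  induction p with
  | nil => simp [SimpleGraph.contractWalk]
  | @cons u w v h q ih =>
    rw [contractWalk_cons]
    split_ifs with heq
    · simpa using ih hp.of_cons
    refine (Walk.cons_isPath_iff _ _).2 ⟨ih hp.of_cons, fun hmem => ?_⟩
    obtain ⟨y, hy, hyu⟩ := (mem_support_contractWalk hab q _).1 hmem
    rcases (contractMap_eq_iff hab).1 hyu with rfl | hyu'
    · exact ((Walk.cons_isPath_iff _ _).1 hp).2 hy
    -- a neighbour of `u` on a path starting at `u` is its successor `w`
    have huy : G.Adj u y := by rw [← SimpleGraph.mem_edgeSet, Sym2.eq_swap, hyu']; exact hab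
    have hyw : y = w := by simpa using hG.eq_snd_of_adj_start hp huy (List.mem_cons_of_mem _ hy)
    exact heq (hyw ▸ hyu).symm

lemma Connected.contractGraph (hG : G.Connected) : (contractGraph hab).Connected where
  preconnected u v := ⟨((contractWalk hab (hG.preconnected u v).some).copy
    (contractMap_val hab u) (contractMap_val hab v))⟩
  nonempty := ⟨⟨a, hab.ne⟩⟩

/-- The contracted graph is a tree by counting: it is connected and has one vertex and one edge
less than `G`. -/
lemma IsTree.contractGraph [Finite V] (hG : G.IsTree) : (contractGraph hab).IsTree := by
  have hinj := injOn_map_contractMap_edgeSet hab hG.isAcyclic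
  have hV : Nat.card {v : V // v ≠ b} = Nat.card V - 1 := by
    have := Fintype.ofFinite V
    classical
    simp [Nat.card_eq_fintype_card, Fintype.card_subtype_compl]
  have hE : 0 < G.edgeSet.ncard := (Set.ncard_pos (Set.toFinite _)).2 ⟨s(a, b), hab⟩
  rw [isTree_iff_connected_and_card] at hG ⊢
  refine ⟨hG.1.contractGraph hab, ?_⟩
  rw [Nat.card_coe_set_eq, edgeSet_contractGraph, hinj.ncard_image,
    Set.ncard_sdiff_singleton_of_mem (show s(a, b) ∈ G.edgeSet from hab), hV, ← hG.2,
    Nat.card_coe_set_eq]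
  omega

lemma neighborSet_contractGraph_of_ne {v : {v : V // v ≠ b}} (hva : v.1 ≠ a) :
    (contractGraph hab).neighborSet v = contractMap hab '' G.neighborSet v.1 := by
  have hv : ∀ x, contractMap hab x = v ↔ x = v.1 := by
    refine fun x => ⟨fun h => ?_, fun h => h ▸ contractMap_val hab v⟩
    by_cases hx : x = b
    · rw [hx, contractMap_right] at h
      exact absurd (congrArg Subtype.val h).symm hva
    · rw [contractMap_of_ne hab hx] at h
      exact congrArg Subtype.val h
  ext w
  simp only [mem_neighborSet, contractGraph_adj, Set.mem_image, hv]
  constructor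
  · rintro ⟨-, x, y, hxy, rfl, rfl⟩
    exact ⟨y, hxy, rfl⟩
  · rintro ⟨y, hy, rfl⟩
    exact ⟨fun h => hy.ne ((hv y).1 h.symm).symm, v.1, y, hy, rfl, rfl⟩

lemma ncard_neighborSet_contractGraph_of_ne (hG : G.IsAcyclic) {v : {v : V // v ≠ b}}
    (hva : v.1 ≠ a) :
    ((contractGraph hab).neighborSet v).ncard = (G.neighborSet v.1).ncard := by
  rw [neighborSet_contractGraph_of_ne hab hva,
    (contractMap_injOn_neighborSet hab hG v.1).ncard_image]

lemma le_ncard_neighborSet_contractGraph_left [Finite V] (hG : G.IsAcyclic) :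
    (G.neighborSet a).ncard - 1 + ((G.neighborSet b).ncard - 1) ≤
      ((contractGraph hab).neighborSet (contractMap hab a)).ncard := by
  set S := (G.neighborSet a \ {b}) ∪ (G.neighborSet b \ {a})
  have hS : ∀ y ∈ S, y ≠ a ∧ y ≠ b := by
    rintro y (⟨hy, hyb⟩ | ⟨hy, hya⟩)
    · exact ⟨hy.ne', hyb⟩
    · exact ⟨hya, hy.ne'⟩
  have hsub : contractMap hab '' S ⊆ (contractGraph hab).neighborSet (contractMap hab a) := by
    rintro _ ⟨y, hyS, rfl⟩
    refine (contractGraph_adj hab).2 ⟨fun h => ?_, ?_⟩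
    · rcases (contractMap_eq_iff hab).1 h with h | h
      · exact (hS y hyS).1 h.symm
      · rcases Sym2.eq_iff.1 h with ⟨-, h⟩ | ⟨h, -⟩
        exacts [(hS y hyS).2 h, hab.ne h]
    rcases hyS with ⟨hy, -⟩ | ⟨hy, -⟩
    · exact ⟨a, y, hy, rfl, rfl⟩
    · exact ⟨b, y, hy, by rw [contractMap_left, contractMap_right], rfl⟩
  have hdisj : Disjoint (G.neighborSet a \ {b}) (G.neighborSet b \ {a}) :=
    Set.disjoint_left.2 fun y ⟨hya, _⟩ ⟨hyb, _⟩ => hG.not_adj_of_adj_of_adj hab hya hyb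
  calc (G.neighborSet a).ncard - 1 + ((G.neighborSet b).ncard - 1)
      = S.ncard := by
        rw [Set.ncard_union_eq hdisj,
          Set.ncard_sdiff_singleton_of_mem (show b ∈ G.neighborSet a from hab),
          Set.ncard_sdiff_singleton_of_mem (show a ∈ G.neighborSet b from hab.symm)]
    _ = (contractMap hab '' S).ncard :=
        ((contractMap_injOn hab).mono fun y hy => (hS y hy).2).ncard_image.symm
    _ ≤ _ := Set.ncard_le_ncard hsub

noncomputable def contractLabel {L : Type*} (lam : Sym2 V → Option L) :
    Sym2 {v : V // v ≠ b} → Option L :=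
  Function.extend (fun e : ↥(G.edgeSet \ {s(a, b)}) => Sym2.map (contractMap hab) e.1)
    (fun e => lam e.1) (fun _ => none)

lemma contractLabel_map {L : Type*} (hG : G.IsAcyclic) (lam : Sym2 V → Option L) {e : Sym2 V}
    (he : e ∈ G.edgeSet) (hne : e ≠ s(a, b)) :
    contractLabel hab lam (Sym2.map (contractMap hab) e) = lam e :=
  (Set.injOn_iff_injective.1 (injOn_map_contractMap_edgeSet hab hG)).extend_apply _ _ ⟨e, he, hne⟩

lemma exists_mem_edges_contractWalk_iff {L : Type*} (hG : G.IsAcyclic) {lam : Sym2 V → Option L}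
    (hlam : lam s(a, b) = none) {u v : V} (p : G.Walk u v) (m : L) :
    (∃ e ∈ (contractWalk hab p).edges, contractLabel hab lam e = some m) ↔
      ∃ e ∈ p.edges, lam e = some m := by
  simp only [mem_edges_contractWalk, ne_eq]
  constructor
  · rintro ⟨_, ⟨e, he, hne, rfl⟩, hm⟩
    exact ⟨e, he, by rwa [contractLabel_map hab hG lam (p.edges_subset_edgeSet he) hne] at hm⟩
  · rintro ⟨e, he, hm⟩
    have hne : e ≠ s(a, b) := fun h => by simp [h, hlam] at hm
    exact ⟨_, ⟨e, he, hne, rfl⟩, by rwa [contractLabel_map hab hG lam (p.edges_subset_edgeSet he) hne]⟩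

end EdgeContraction

end SimpleGraph

namespace GenFitch

open SimpleGraph

namespace RootedTree

variable {X : Type} {T : RootedTree X}

lemma exists_isPath_from_root (T : RootedTree X) (v : T.V) :
    ∃ p : T.G.Walk T.root v, p.IsPath :=
  T.isTree.connected.exists_isPath _ _

lemma anc_iff_mem_support {u v : T.V} {p : T.G.Walk T.root v} (hp : p.IsPath) :
    T.Anc u v ↔ u ∈ p.support :=
  ⟨fun h => h p hp, fun h _ hq => T.isTree.isAcyclic.walk_eq_of_isPath hq hp ▸ h⟩

lemma anc_refl (v : T.V) : T.Anc v v := fun p _ => p.end_mem_support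

lemma root_anc (v : T.V) : T.Anc T.root v := fun p _ => p.start_mem_support

lemma Anc.trans {u v w : T.V} (huv : T.Anc u v) (hvw : T.Anc v w) : T.Anc u w := by
  classical
  obtain ⟨p, hp⟩ := T.exists_isPath_from_root w
  have hv := (anc_iff_mem_support hp).1 hvw
  exact (anc_iff_mem_support hp).2 (p.support_takeUntil_subset_support hv
    ((anc_iff_mem_support (hp.takeUntil hv)).1 huv))

lemma Anc.antisymm {u v : T.V} (huv : T.Anc u v) (hvu : T.Anc v u) : u = v := by
  classical
  by_contra hne
  obtain ⟨p, hp⟩ := T.exists_isPath_from_root v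
  have hu := (anc_iff_mem_support hp).1 huv
  have hv := (anc_iff_mem_support (hp.takeUntil hu)).1 hvu
  have hlen := congrArg Walk.length
    (T.isTree.isAcyclic.walk_eq_of_isPath ((hp.takeUntil hu).takeUntil hv) hp)
  have := (p.takeUntil u hu).length_takeUntil_le_length hv
  have := Walk.length_takeUntil_lt_length hu hne
  omega

lemma anc_total {u v w : T.V} (hu : T.Anc u w) (hv : T.Anc v w) : T.Anc u v ∨ T.Anc v u := by
  obtain ⟨p, hp⟩ := T.exists_isPath_from_root w
  obtain ⟨q, r, rfl⟩ := Walk.mem_support_iff_exists_append.1 ((anc_iff_mem_support hp).1 hu)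
  rcases (Walk.mem_support_append_iff _ _).1 ((anc_iff_mem_support hp).1 hv) with hvq | hvr
  · exact Or.inr ((anc_iff_mem_support hp.of_append_left).2 hvq)
  · obtain ⟨r₁, r₂, rfl⟩ := Walk.mem_support_iff_exists_append.1 hvr
    rw [Walk.append_assoc] at hp
    exact Or.inl ((anc_iff_mem_support hp.of_append_left).2
      ((Walk.mem_support_append_iff _ _).2 (Or.inl q.end_mem_support)))

lemma anc_or_anc_of_adj {a b : T.V} (hab : T.G.Adj a b) : T.Anc a b ∨ T.Anc b a := by
  obtain ⟨p, hp⟩ := T.exists_isPath_from_root a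
  obtain ⟨q, hq⟩ := T.exists_isPath_from_root b
  by_cases ha : a ∈ q.support
  · exact Or.inl ((anc_iff_mem_support hq).2 ha)
  · exact Or.inr ((anc_iff_mem_support hp).2
      (T.isTree.isAcyclic.mem_support_of_ne_mem_support_of_adj_of_isPath hp hq hab ha))

lemma exists_isLcaSet_pair (s t : T.V) : ∃ l, T.IsLcaSet l {s, t} := by
  have := T.fintypeV
  -- the lowest common ancestor is the one with the most ancestors
  obtain ⟨l, ⟨hls, hlt⟩, hmax⟩ := Set.exists_max_image {u | T.Anc u s ∧ T.Anc u t}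
    (fun u => {w | T.Anc w u}.ncard) (Set.toFinite _) ⟨T.root, root_anc s, root_anc t⟩
  refine ⟨l, by simp [hls, hlt], fun u hu => ?_⟩
  have hus := hu s (by simp)
  rcases anc_total hus hls with h | h
  · exact h
  by_contra hul
  refine (hmax u ⟨hus, hu t (by simp)⟩).not_gt (Set.ncard_lt_ncard ?_ (Set.toFinite _))
  exact ⟨fun w hw => Anc.trans hw h, fun hsub => hul (hsub (anc_refl u))⟩

lemma IsLcaSet.unique {l l' : T.V} {S : Set T.V} (h : T.IsLcaSet l S) (h' : T.IsLcaSet l' S) :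
    l = l' :=
  (h'.2 l h.1).antisymm (h.2 l' h'.1)

lemma two_le_deg {v : T.V} (hv : ¬T.IsLeaf v) : 2 ≤ T.deg v := by
  by_contra h
  exact hv ((T.leaf_iff v).2 (by unfold deg at h; omega))

section ContractEdge

variable {a b : T.V}

lemma isLeaf_iff_ncard_neighborSet_contractGraph (hab : T.G.Adj a b) (ha : ¬T.IsLeaf a)
    (hb : ¬T.IsLeaf b) (v : {v : T.V // v ≠ b}) :
    (∃ x, contractMap hab (T.leaf x) = v) ↔ ((contractGraph hab).neighborSet v).ncard ≤ 1 := by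
  have := T.fintypeV
  have hleaf : (∃ x, contractMap hab (T.leaf x) = v) ↔ T.IsLeaf v.1 := by
    simp only [contractMap_of_ne hab (fun h => hb ⟨_, h⟩), Subtype.ext_iff]
    rfl
  rw [hleaf]
  by_cases hva : v.1 = a
  · have hv : v = contractMap hab a := by rw [contractMap_left]; exact Subtype.ext hva
    have := le_ncard_neighborSet_contractGraph_left hab T.isTree.isAcyclic
    have := two_le_deg ha
    have := two_le_deg hb
    rw [hva, hv]
    unfold deg at *
    simp only [ha, false_iff, not_le]
    omega
  · rw [ncard_neighborSet_contractGraph_of_ne hab T.isTree.isAcyclic hva]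
    exact T.leaf_iff v.1

variable (T) in
noncomputable abbrev contractEdge (hab : T.G.Adj a b) (ha : ¬T.IsLeaf a) (hb : ¬T.IsLeaf b) :
    RootedTree X where
  V := {v : T.V // v ≠ b}
  fintypeV := have := T.fintypeV; Fintype.ofFinite _
  G := contractGraph hab
  isTree := have := T.fintypeV; T.isTree.contractGraph hab
  root := contractMap hab T.root
  leaf x := contractMap hab (T.leaf x)
  leaf_inj _ _ h := T.leaf_inj (contractMap_injOn hab (fun h => hb ⟨_, h⟩) (fun h => hb ⟨_, h⟩) h)
  leaf_iff := isLeaf_iff_ncard_neighborSet_contractGraph hab ha hb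

variable (hab : T.G.Adj a b) (ha : ¬T.IsLeaf a) (hb : ¬T.IsLeaf b)

lemma deg_contractEdge_of_ne {v : {v : T.V // v ≠ b}} (hva : v.1 ≠ a) :
    (T.contractEdge hab ha hb).deg v = T.deg v.1 :=
  ncard_neighborSet_contractGraph_of_ne hab T.isTree.isAcyclic hva

lemma deg_le_deg_contractEdge_left :
    T.deg a - 1 + (T.deg b - 1) ≤ (T.contractEdge hab ha hb).deg (contractMap hab a) :=
  have := T.fintypeV
  le_ncard_neighborSet_contractGraph_left hab T.isTree.isAcyclic

lemma Phylo.contractEdge (hphy : T.Phylo) : (T.contractEdge hab ha hb).Phylo := by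
  have hmerged_of : ∀ v : {v : T.V // v ≠ b}, v.1 = a → v = contractMap hab a := fun v h => by
    rw [contractMap_left]; exact Subtype.ext h
  have hmerged : 3 ≤ (T.contractEdge hab ha hb).deg (contractMap hab a) := by
    have := deg_le_deg_contractEdge_left hab ha hb
    have := two_le_deg ha
    have := two_le_deg hb
    have : 3 ≤ T.deg a ∨ 3 ≤ T.deg b := by
      by_cases hra : a = T.root
      · exact Or.inr (hphy.2.2 b hb fun h => hab.ne (hra.trans h.symm))
      · exact Or.inl (hphy.2.2 a ha hra)
    omega
  have hroot : 2 ≤ (T.contractEdge hab ha hb).deg (contractMap hab T.root) := by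
    by_cases h : (contractMap hab T.root).1 = a
    · rw [hmerged_of _ h]; omega
    · rw [deg_contractEdge_of_ne hab ha hb h]
      have hrb : T.root ≠ b := fun hrb => h (by rw [hrb, contractMap_right])
      rw [contractMap_of_ne hab hrb]
      exact hphy.2.1
  refine ⟨fun hl => ?_, hroot, fun v hvl hvr => ?_⟩
  · exact absurd (((T.contractEdge hab ha hb).leaf_iff _).1 hl) (not_le.2 hroot)
  by_cases hva : v.1 = a
  · rw [hmerged_of v hva]; exact hmerged
  rw [deg_contractEdge_of_ne hab ha hb hva]
  refine hphy.2.2 v.1 ?_ fun h => hvr ?_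
  · rintro ⟨x, hx⟩
    exact hvl ⟨x, by rw [← contractMap_val hab v, ← hx]⟩
  · show v = contractMap hab T.root
    rw [← h, contractMap_val]

lemma isContractionMap_contractEdge :
    IsContractionMap T (T.contractEdge hab ha hb) (contractMap hab) where
  surj u := ⟨u, contractMap_val hab u⟩
  root_map := rfl
  leaf_map _ := rfl
  adj_map x y hxy := by
    by_cases h : contractMap hab x = contractMap hab y
    · exact Or.inl h
    · exact Or.inr ((contractGraph_adj hab).2 ⟨h, x, y, hxy, rfl, rfl⟩)
  adj_lift _ _ huv :=
    let ⟨_, x, y, hxy, hx, hy⟩ := (contractGraph_adj hab).1 huv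
    ⟨x, y, hxy, hx, hy⟩
  fiber_conn := connected_induce_contractMap_fiber hab

lemma anc_contractEdge_iff {u : {v : T.V // v ≠ b}} {v : T.V} :
    (T.contractEdge hab ha hb).Anc u (contractMap hab v) ↔
      ∃ z, T.Anc z v ∧ contractMap hab z = u := by
  obtain ⟨p, hp⟩ := T.exists_isPath_from_root v
  rw [anc_iff_mem_support (T := T.contractEdge hab ha hb) (hp.contractWalk hab T.isTree.isAcyclic),
    mem_support_contractWalk]
  simp only [anc_iff_mem_support hp]

lemma IsLcaSet.contractEdge {l s t : T.V} (hl : T.IsLcaSet l {s, t}) :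
    (T.contractEdge hab ha hb).IsLcaSet (contractMap hab l)
      {contractMap hab s, contractMap hab t} := by
  have hanc : ∀ {u v : T.V}, T.Anc u v →
      (T.contractEdge hab ha hb).Anc (contractMap hab u) (contractMap hab v) :=
    fun h => (anc_contractEdge_iff hab ha hb).2 ⟨_, h, rfl⟩
  refine ⟨?_, fun u hu => ?_⟩
  · rintro _ (rfl | rfl)
    exacts [hanc (hl.1 s (by simp)), hanc (hl.1 t (by simp))]
  obtain ⟨zs, hzs, rfl⟩ := (anc_contractEdge_iff hab ha hb).1 (hu (contractMap hab s) (by simp))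
  obtain ⟨zt, hzt, hz⟩ := (anc_contractEdge_iff hab ha hb).1 (hu (contractMap hab t) (by simp))
  suffices ∃ z, T.Anc z s ∧ T.Anc z t ∧ contractMap hab z = contractMap hab zs by
    obtain ⟨z, hs, ht, hz⟩ := this
    rw [← hz]
    exact hanc (hl.2 z (by rintro _ (rfl | rfl); exacts [hs, ht]))
  rcases (contractMap_eq_iff hab).1 hz with rfl | he
  · exact ⟨zt, hzs, hzt, rfl⟩
  -- `zt` and `zs` are the ends of the edge `ab`, and the upper one is a common ancestor
  have hadj : T.G.Adj zt zs := by rw [← mem_edgeSet, he]; exact hab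
  rcases anc_or_anc_of_adj hadj with h | h
  · exact ⟨zt, h.trans hzs, hzt, hz⟩
  · exact ⟨zs, hzs, h.trans hzt, rfl⟩

lemma pathHasLabel_contractEdge_iff {L : Type} {lam : Sym2 T.V → Option L}
    (hlam : lam s(a, b) = none) (x y : X) (m : L) :
    PathHasLabel (T.contractEdge hab ha hb) (contractLabel hab lam) x y m ↔
      PathHasLabel T lam x y m := by
  have hA := T.isTree.isAcyclic
  constructor
  · rintro ⟨l', hl', p', hp', he'⟩
    obtain ⟨l, hl⟩ := exists_isLcaSet_pair (T.leaf x) (T.leaf y)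
    obtain ⟨p, hp⟩ := T.isTree.connected.exists_isPath l (T.leaf y)
    obtain rfl := (hl.contractEdge hab ha hb).unique hl'
    obtain rfl := (T.contractEdge hab ha hb).isTree.isAcyclic.walk_eq_of_isPath hp'
      (hp.contractWalk hab hA)
    exact ⟨l, hl, p, hp, (exists_mem_edges_contractWalk_iff hab hA hlam p m).1 he'⟩
  · rintro ⟨l, hl, p, hp, he⟩
    exact ⟨_, hl.contractEdge hab ha hb, _, hp.contractWalk hab hA,
      (exists_mem_edges_contractWalk_iff hab hA hlam p m).2 he⟩

lemma explains_contractEdge {L : Type} {lam : Sym2 T.V → Option L} {eps : X → X → Option L}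
    (h : Explains T lam eps) (hlam : lam s(a, b) = none) :
    Explains (T.contractEdge hab ha hb) (contractLabel hab lam) eps := by
  intro x y hxy
  simp only [pathHasLabel_contractEdge_iff hab ha hb hlam]
  exact h x y hxy

end ContractEdge

end RootedTree

theorem stmt10_general {X M : Type}
    (eps : X → X → Option M)
    (T : RootedTree X) (lam : Sym2 T.V → Option M)
    (hlr : LeastResolved eps T lam) :
    ∀ a b : T.V, T.G.Adj a b → ¬ T.IsLeaf a → ¬ T.IsLeaf b →
      lam s(a, b) ≠ none := by
  intro a b hab ha hb hlam
  obtain ⟨hphy, hexp, hmin⟩ := hlr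
  exact hmin (T.contractEdge hab ha hb) (contractMap hab) (contractLabel hab lam)
    (T.isContractionMap_contractEdge hab ha hb)
    (fun hinj => hab.ne (hinj ((contractMap_left hab).trans (contractMap_right hab).symm)))
    (hphy.contractEdge hab ha hb) (RootedTree.explains_contractEdge hab ha hb hexp hlam)

theorem stmt10 {X M : Type} [Fintype X] [Fintype M] [Nonempty M]
    (hX : 1 < Fintype.card X)
    (eps : X → X → Option M)
    (htl : TreeLike eps)
    (T : RootedTree X) (lam : Sym2 T.V → Option M)
    (hlr : LeastResolved eps T lam) :
    ∀ a b : T.V, T.G.Adj a b → ¬ T.IsLeaf a → ¬ T.IsLeaf b →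
      lam s(a, b) ≠ none :=
  stmt10_general eps T lam hlr

end GenFitch
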